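/- arXiv:2012.06425 — 6 statements merged into one kernel-verified Lean document; each statement's English description precedes it below -/
import Mathlib

section
/- For a regular k-jet γ ∈ J_k^{reg}(1,n) with normalized derivatives v_i = γ^{(i)}/i!, the orthogonal complement of the solution space S_γ^{k,1} = {Ψ ∈ J_k(n,1) : Ψ∘γ = 0} in J_k(n,1)* ≅ Sym^{≤k}ℂⁿ is the k-dimensional span of the vectors v₁, v₂+v₁², v₃+2v₁v₂+v₁³, ..., Σ_{i₁+...+i_r = k} v_{i₁}⋯v_{i_r}. -/
noncomputable section

/-- The linear polynomial `Σ_j w_j x_j` associated to a vector `w ∈ ℂⁿ`. -/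
def linOf (n : ℕ) (w : Fin n → ℂ) : MvPolynomial (Fin n) ℂ :=
  ∑ j, MvPolynomial.C (w j) * MvPolynomial.X j

/-- `g_m = Σ_{i₁+⋯+i_r = m, i_t ≥ 1} v_{i₁}⋯v_{i_r}`, an element of `Sym^{≤k}ℂⁿ`
modelled inside `ℂ[x₁,…,x_n]`. -/
def gvec (n : ℕ) (v : ℕ → Fin n → ℂ) (m : ℕ) : MvPolynomial (Fin n) ℂ :=
  ∑ r ∈ Finset.Icc 1 m,
    ∑ a ∈ (Finset.Nat.antidiagonalTuple r m).filter (fun a => ∀ i, 0 < a i),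
      ∏ i, linOf n (v (a i))

/-- The duality pairing between `J_k(n,1)` and `Sym^{≤k}ℂⁿ` (both modelled as
polynomials without constant term): `⟨x^α, x^α⟩ = α!/|α|!`, so that the `m`-th
coefficient of `Ψ∘γ` equals `⟨Ψ, g_m⟩ = Ψ^{(r)}`-polarizations evaluated on the `v`'s. -/
def jetPairing (n : ℕ) (P Q : MvPolynomial (Fin n) ℂ) : ℂ :=
  ∑ α ∈ Q.support,
    (((∏ j, Nat.factorial (α j) : ℕ) : ℂ) / ((Nat.factorial (∑ j, α j) : ℕ) : ℂ))
      * P.coeff α * Q.coeff α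

/-- The curve jet `γ_j(z) = Σ_{i=1}^k v_{i,j} z^i`. -/
def curveOf (n k : ℕ) (v : ℕ → Fin n → ℂ) : Fin n → Polynomial ℂ :=
  fun j => ∑ i ∈ Finset.Icc 1 k, Polynomial.C (v i j) * Polynomial.X ^ i

/-!
Put `ℓ(w) = Σ_j w_j x_j` and `L(z) = Σ_j x_j γ_j(z) = Σ_i ℓ(v_i) z^i` (`curveLinearForm`). For
`m ≤ k`, `g_m` is the `z^m`-coefficient of `Σ_{r ≥ 1} L(z)^r`, and the multinomial theorem gives
`coeff_α g_m = (|α|!/α!) · coeff_{z^m} γ^α`. As the pairing weighs `x^α` by `α!/|α|!`, this says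
that `⟨Ψ, g_m⟩` is the `z^m`-coefficient of `Ψ ∘ γ`; so `S_γ` is the orthogonal of the span of
the `g_m`, and the span is recovered as a double orthogonal, the pairing being symmetric and
nondegenerate on the finite-dimensional space of polynomials of degree `≤ k` without constant term.
-/

open Finset MvPolynomial

namespace LinearMap.BilinForm

variable {K M : Type*} [Field K] [AddCommGroup M] [Module K M]

theorem mem_span_iff_of_restrict_nondegenerate {B : LinearMap.BilinForm K M} (hB : B.IsSymm)
    {W : Submodule K M} [FiniteDimensional K W] (hW : (B.restrict W).Nondegenerate)
    {S : Set M} (hS : S ⊆ W) (Q : M) :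
    Q ∈ Submodule.span K S ↔ Q ∈ W ∧ ∀ Ψ ∈ W, (∀ s ∈ S, B Ψ s = 0) → B Ψ Q = 0 := by
  constructor
  · intro hQ
    refine ⟨Submodule.span_le.mpr hS hQ, fun Ψ _ hΨ => ?_⟩
    exact Submodule.span_le (p := LinearMap.ker (B Ψ)).mpr hΨ hQ
  · rintro ⟨hQW, hQ⟩
    set S' : Set W := W.subtype ⁻¹' S
    have hspan : Submodule.span K S = (Submodule.span K S').map W.subtype := by
      rw [Submodule.map_span, Set.image_preimage_eq_of_subset (by simpa using hS)]
    have hQ' : (⟨Q, hQW⟩ : W) ∈ (B.restrict W).orthogonal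
        ((B.restrict W).orthogonal (Submodule.span K S')) := by
      intro Ψ hΨ
      refine hQ Ψ Ψ.2 fun s hs => ?_
      rw [hB.eq]
      exact hΨ ⟨s, hS hs⟩ (Submodule.subset_span hs)
    rw [orthogonal_orthogonal hW ((hB.restrict W).isRefl)] at hQ'
    rw [hspan]
    exact ⟨_, hQ', rfl⟩

end LinearMap.BilinForm

section Pairing

variable {n : ℕ}

def jetWeight (α : Fin n →₀ ℕ) : ℂ :=
  ((∏ j, Nat.factorial (α j) : ℕ) : ℂ) / ((Nat.factorial (∑ j, α j) : ℕ) : ℂ)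

theorem jetWeight_mul_multinomial (α : Fin n →₀ ℕ) :
    jetWeight α * Nat.multinomial univ α = 1 := by
  rw [jetWeight, div_mul_eq_mul_div,
    div_eq_one_iff_eq (Nat.cast_ne_zero.mpr (Nat.factorial_ne_zero _))]
  exact_mod_cast Nat.multinomial_spec univ α

theorem jetPairing_eq_sum_of_support_subset (P : MvPolynomial (Fin n) ℂ)
    {Q : MvPolynomial (Fin n) ℂ} {s : Finset (Fin n →₀ ℕ)} (hs : Q.support ⊆ s) :
    jetPairing n P Q = ∑ α ∈ s, jetWeight α * P.coeff α * Q.coeff α :=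
  Finset.sum_subset hs fun α _ hα => by simp [notMem_support_iff.mp hα]

theorem jetPairing_comm (P Q : MvPolynomial (Fin n) ℂ) :
    jetPairing n P Q = jetPairing n Q P := by
  rw [jetPairing_eq_sum_of_support_subset P subset_union_right,
    jetPairing_eq_sum_of_support_subset Q (subset_union_left (s₂ := Q.support))]
  exact sum_congr rfl fun α _ => by ring

theorem jetPairing_monomial_one_left (α : Fin n →₀ ℕ) (Q : MvPolynomial (Fin n) ℂ) :
    jetPairing n (monomial α 1) Q = jetWeight α * Q.coeff α := by
  rw [jetPairing_eq_sum_of_support_subset _ (subset_insert α Q.support),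
    sum_eq_single_of_mem α (mem_insert_self α _)]
  · simp
  · intro β _ hβ
    simp [coeff_monomial, Ne.symm hβ]

def jetPairingForm (n : ℕ) : LinearMap.BilinForm ℂ (MvPolynomial (Fin n) ℂ) :=
  LinearMap.mk₂ ℂ (jetPairing n)
    (fun P P' Q => by
      simp only [jetPairing, coeff_add, ← sum_add_distrib, mul_add, add_mul])
    (fun c P Q => by
      simp only [jetPairing, coeff_smul, smul_eq_mul, mul_sum]
      exact sum_congr rfl fun α _ => by ring)
    (fun P Q Q' => by
      rw [jetPairing_comm, jetPairing_comm P, jetPairing_comm P]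
      simp only [jetPairing, coeff_add, ← sum_add_distrib, mul_add, add_mul])
    (fun c P Q => by
      rw [jetPairing_comm, jetPairing_comm P]
      simp only [jetPairing, coeff_smul, smul_eq_mul, mul_sum]
      exact sum_congr rfl fun α _ => by ring)

@[simp] theorem jetPairingForm_apply (P Q : MvPolynomial (Fin n) ℂ) :
    jetPairingForm n P Q = jetPairing n P Q := rfl

theorem jetPairingForm_isSymm : (jetPairingForm n).IsSymm := ⟨jetPairing_comm⟩

end Pairing

def jetSpace (n k : ℕ) : Submodule ℂ (MvPolynomial (Fin n) ℂ) :=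
  restrictTotalDegree (Fin n) ℂ k ⊓ LinearMap.ker (lcoeff ℂ 0)

theorem mem_jetSpace {n k : ℕ} {Q : MvPolynomial (Fin n) ℂ} :
    Q ∈ jetSpace n k ↔ Q.totalDegree ≤ k ∧ Q.coeff 0 = 0 := by
  simp [jetSpace, mem_restrictTotalDegree]

instance (n k : ℕ) : FiniteDimensional ℂ (jetSpace n k) :=
  Submodule.finiteDimensional_inf_left ..

theorem jetPairingForm_restrict_jetSpace_nondegenerate (n k : ℕ) :
    ((jetPairingForm n).restrict (jetSpace n k)).Nondegenerate := by
  refine ((jetPairingForm_isSymm.restrict _).isRefl.nondegenerate_iff_separatingLeft).mpr ?_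
  rintro ⟨Q, hQ⟩ hperp
  ext α
  by_cases hα : α = 0
  · simpa [hα] using (mem_jetSpace.mp hQ).2
  by_cases hQα : Q.coeff α = 0
  · exact hQα
  have hmono : monomial α 1 ∈ jetSpace n k := by
    refine mem_jetSpace.mpr ⟨?_, by simp [coeff_monomial, hα]⟩
    rw [totalDegree_monomial _ one_ne_zero]
    exact (le_totalDegree (mem_support_iff.mpr hQα)).trans (mem_jetSpace.mp hQ).1
  have hpair : jetPairing n (monomial α 1) Q = 0 := by
    rw [jetPairing_comm]
    exact hperp ⟨_, hmono⟩
  rw [jetPairing_monomial_one_left] at hpair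
  exact (mul_eq_zero.mp hpair).resolve_left
    (left_ne_zero_of_mul_eq_one (jetWeight_mul_multinomial α))

theorem coeff_prod_sum_C_mul_X_pow {R : Type*} [CommSemiring R] {r m k : ℕ} (hmk : m ≤ k)
    (c : Fin r → ℕ → R) :
    (∏ t, ∑ i ∈ Icc 1 k, Polynomial.C (c t i) * Polynomial.X ^ i).coeff m
      = ∑ a ∈ (Nat.antidiagonalTuple r m).filter (fun a => ∀ t, 0 < a t), ∏ t, c t (a t) := by
  have hterm (a : Fin r → ℕ) :
      (∏ t, Polynomial.C (c t (a t)) * Polynomial.X ^ a t).coeff m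
        = if ∑ t, a t = m then ∏ t, c t (a t) else 0 := by
    rw [prod_mul_distrib, ← map_prod, prod_pow_eq_pow_sum, Polynomial.coeff_C_mul_X_pow]
    simp only [eq_comm]
  rw [prod_univ_sum, Polynomial.finsetSum_coeff, sum_congr rfl fun a _ => hterm a,
    ← sum_filter]
  refine sum_congr (ext fun a => ?_) fun _ _ => rfl
  simp only [mem_filter, Fintype.mem_piFinset, mem_Icc, Nat.mem_antidiagonalTuple]
  constructor
  · rintro ⟨h, hsum⟩
    exact ⟨hsum, fun t => (h t).1⟩
  · rintro ⟨hsum, hpos⟩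
    exact ⟨fun t => ⟨hpos t, (single_le_sum (fun _ _ => Nat.zero_le _) (mem_univ t)).trans
      (hsum.trans_le hmk)⟩, hsum⟩

theorem coeff_coeff_pow_sum_C_X_mul_map {R σ : Type*} [CommSemiring R] [Fintype σ]
    (p : σ → Polynomial R) (r m : ℕ) (α : σ →₀ ℕ) :
    (((∑ j, Polynomial.C (X j) * (p j).map C) ^ r).coeff m).coeff α
      = if ∑ j, α j = r then Nat.multinomial univ α * (∏ j, p j ^ α j).coeff m else 0 := by
  classical
  have hterm (β : σ → ℕ) : ∏ j, (Polynomial.C (X j) * (p j).map C) ^ β j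
      = Polynomial.C (monomial (Finsupp.equivFunOnFinite.symm β) (1 : R))
        * (∏ j, p j ^ β j).map C := by
    have hmono : ∏ j, (X j : MvPolynomial σ R) ^ β j
        = monomial (Finsupp.equivFunOnFinite.symm β) 1 := by
      rw [monomial_eq, C_1, one_mul, Finsupp.prod_fintype _ _ fun _ => pow_zero _]
      rfl
    simp only [mul_pow, prod_mul_distrib, ← map_pow, ← map_prod, Polynomial.map_prod,
      Polynomial.map_pow, hmono]
  rw [sum_pow_eq_sum_piAntidiag]
  simp only [hterm, Polynomial.finsetSum_coeff, coeff_sum, Polynomial.coeff_natCast_mul,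
    Polynomial.coeff_C_mul, Polynomial.coeff_map]
  have hcoeff (N : ℕ) (β : σ → ℕ) (c : R) :
      coeff α ((N : MvPolynomial σ R) * (monomial (Finsupp.equivFunOnFinite.symm β) 1 * C c))
        = if Finsupp.equivFunOnFinite α = β then N * c else 0 := by
    rw [← map_natCast (C : R →+* MvPolynomial σ R), coeff_C_mul, mul_comm (monomial _ _),
      C_mul_monomial, coeff_monomial]
    simp only [Equiv.symm_apply_eq, eq_comm (a := β), mul_one, mul_ite, mul_zero]
  simp only [hcoeff, sum_ite_eq, mem_piAntidiag, mem_univ, implies_true, and_true]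
  rfl

def curveLinearForm (n k : ℕ) (v : ℕ → Fin n → ℂ) : Polynomial (MvPolynomial (Fin n) ℂ) :=
  ∑ j, Polynomial.C (X j) * (curveOf n k v j).map C

section Curve

variable {n k : ℕ} (v : ℕ → Fin n → ℂ)

theorem curveLinearForm_eq_sum_linOf :
    curveLinearForm n k v = ∑ i ∈ Icc 1 k, Polynomial.C (linOf n (v i)) * Polynomial.X ^ i := by
  simp only [curveLinearForm, curveOf, linOf, Polynomial.map_sum, Polynomial.map_mul,
    Polynomial.map_C, Polynomial.map_pow, Polynomial.map_X, map_sum, mul_sum, sum_mul]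
  rw [sum_comm]
  refine sum_congr rfl fun i _ => sum_congr rfl fun j _ => ?_
  simp only [map_mul]
  ring

theorem gvec_eq_sum_coeff_curveLinearForm_pow {m : ℕ} (hmk : m ≤ k) :
    gvec n v m = ∑ r ∈ Icc 1 m, (curveLinearForm n k v ^ r).coeff m := by
  refine sum_congr rfl fun r _ => ?_
  rw [curveLinearForm_eq_sum_linOf, ← Fin.prod_const, coeff_prod_sum_C_mul_X_pow hmk]

theorem coeff_gvec {m : ℕ} (hmk : m ≤ k) (α : Fin n →₀ ℕ) :
    (gvec n v m).coeff α = if ∑ j, α j ∈ Icc 1 m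
      then Nat.multinomial univ α * (∏ j, curveOf n k v j ^ α j).coeff m else 0 := by
  rw [gvec_eq_sum_coeff_curveLinearForm_pow v hmk, coeff_sum]
  simp only [curveLinearForm, coeff_coeff_pow_sum_C_X_mul_map, sum_ite_eq]

theorem X_dvd_curveOf (j : Fin n) : Polynomial.X ∣ curveOf n k v j :=
  dvd_sum fun _ hi => (dvd_pow_self _ (Nat.one_le_iff_ne_zero.mp (mem_Icc.mp hi).1)).mul_left _

theorem coeff_prod_curveOf_pow_of_lt {m : ℕ} (α : Fin n →₀ ℕ) (hm : m < ∑ j, α j) :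
    (∏ j, curveOf n k v j ^ α j).coeff m = 0 := by
  obtain ⟨q, hq⟩ : Polynomial.X ^ (∑ j, α j) ∣ ∏ j, curveOf n k v j ^ α j := by
    rw [← prod_pow_eq_pow_sum]
    exact prod_dvd_prod_of_dvd _ _ fun j _ => pow_dvd_pow_of_dvd (X_dvd_curveOf v j) _
  rw [hq, Polynomial.coeff_X_pow_mul', if_neg hm.not_ge]

theorem coeff_prod_curveOf_pow {m : ℕ} (hmk : m ≤ k) {α : Fin n →₀ ℕ} (hα : α ≠ 0) :
    (∏ j, curveOf n k v j ^ α j).coeff m = jetWeight α * (gvec n v m).coeff α := by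
  rw [coeff_gvec v hmk]
  by_cases hdeg : ∑ j, α j ≤ m
  · have hpos : 0 < ∑ j, α j := by
      obtain ⟨j, hj⟩ := Finsupp.ne_iff.mp hα
      exact (pos_iff_ne_zero.mpr hj).trans_le
        (single_le_sum (fun _ _ => Nat.zero_le _) (mem_univ j))
    rw [if_pos (mem_Icc.mpr ⟨hpos, hdeg⟩), ← mul_assoc, jetWeight_mul_multinomial, one_mul]
  · rw [if_neg (fun h => hdeg (mem_Icc.mp h).2), mul_zero,
      coeff_prod_curveOf_pow_of_lt v α (not_le.mp hdeg)]

theorem coeff_aeval_curveOf {m : ℕ} (hmk : m ≤ k) {Ψ : MvPolynomial (Fin n) ℂ}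
    (hΨ : Ψ.coeff 0 = 0) :
    (aeval (curveOf n k v) Ψ).coeff m = jetPairing n Ψ (gvec n v m) := by
  rw [jetPairing_comm, jetPairing_eq_sum_of_support_subset _ subset_rfl]
  conv_lhs => rw [Ψ.as_sum]
  rw [map_sum, Polynomial.finsetSum_coeff]
  refine sum_congr rfl fun α hα => ?_
  have hα0 : α ≠ 0 := by
    rintro rfl
    exact mem_support_iff.mp hα hΨ
  rw [aeval_monomial, Finsupp.prod_fintype _ _ fun _ => pow_zero _, Polynomial.algebraMap_eq,
    Polynomial.coeff_C_mul, coeff_prod_curveOf_pow v hmk hα0]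
  ring

theorem gvec_mem_jetSpace {m : ℕ} (hmk : m ≤ k) : gvec n v m ∈ jetSpace n k := by
  have hsupp : ∀ α ∈ (gvec n v m).support, ∑ j, α j ∈ Icc 1 m := fun α hα => by
    by_contra h
    exact mem_support_iff.mp hα (by rw [coeff_gvec v hmk, if_neg h])
  refine mem_jetSpace.mpr ⟨Finset.sup_le fun α hα => ?_, ?_⟩
  · rw [Finsupp.sum_fintype _ _ fun _ => rfl]
    exact (mem_Icc.mp (hsupp α hα)).2.trans hmk
  · by_contra h
    simpa using hsupp 0 (mem_support_iff.mpr h)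

end Curve

theorem annihilator_of_solution_space_general (n k : ℕ)
    (v : ℕ → Fin n → ℂ) :
    ((Submodule.span ℂ ((fun m => gvec n v m) '' (Set.Icc 1 k)) :
        Submodule ℂ (MvPolynomial (Fin n) ℂ)) : Set (MvPolynomial (Fin n) ℂ))
      = {Q : MvPolynomial (Fin n) ℂ |
          Q.totalDegree ≤ k ∧ MvPolynomial.coeff 0 Q = 0 ∧
          ∀ Ψ : MvPolynomial (Fin n) ℂ,
            Ψ.totalDegree ≤ k → MvPolynomial.coeff 0 Ψ = 0 →
            (∀ m ∈ Finset.Icc 1 k,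
              ((MvPolynomial.aeval (curveOf n k v)) Ψ).coeff m = 0) →
            jetPairing n Ψ Q = 0} := by
  have hS : gvec n v '' Set.Icc 1 k ⊆ jetSpace n k := by
    rintro _ ⟨m, hm, rfl⟩
    exact gvec_mem_jetSpace v hm.2
  ext Q
  rw [SetLike.mem_coe, LinearMap.BilinForm.mem_span_iff_of_restrict_nondegenerate
    jetPairingForm_isSymm (jetPairingForm_restrict_jetSpace_nondegenerate n k) hS]
  simp only [mem_jetSpace, Set.mem_ofPred_eq, and_assoc, Set.forall_mem_image,
    jetPairingForm_apply, Set.mem_Icc, Finset.mem_Icc, and_imp]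
  refine and_congr_right fun _ => and_congr_right fun _ => forall_congr' fun Ψ =>
    imp_congr_right fun _ => imp_congr_right fun hΨ => imp_congr_left <|
      forall_congr' fun m => imp_congr_right fun _ => imp_congr_right fun hmk => ?_
  rw [coeff_aeval_curveOf v hmk hΨ]

theorem annihilator_of_solution_space (n k : ℕ) (hk : 1 ≤ k)
    (v : ℕ → Fin n → ℂ) (hv0 : v 0 = 0) (hv1 : v 1 ≠ 0) :
    ((Submodule.span ℂ ((fun m => gvec n v m) '' (Set.Icc 1 k)) :
        Submodule ℂ (MvPolynomial (Fin n) ℂ)) : Set (MvPolynomial (Fin n) ℂ))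
      = {Q : MvPolynomial (Fin n) ℂ |
          Q.totalDegree ≤ k ∧ MvPolynomial.coeff 0 Q = 0 ∧
          ∀ Ψ : MvPolynomial (Fin n) ℂ,
            Ψ.totalDegree ≤ k → MvPolynomial.coeff 0 Ψ = 0 →
            (∀ m ∈ Finset.Icc 1 k,
              ((MvPolynomial.aeval (curveOf n k v)) Ψ).coeff m = 0) →
            jetPairing n Ψ Q = 0} :=
  annihilator_of_solution_space_general n k v

end
end

section
/- In the polynomial ring ℂ[t, β₁₂, β₁₃, β₂₂, β₂₃, β₃₃], the monomial ideal M = (β₂₂β₃₃, β₃₃t, β₂₂²t, β₂₃t, β₁₂β₂₂t, β₂₂t², t³) has primary decomposition M = (t,β₂₂) ∩ (t,β₃₃) ∩ (t³,β₂₂,β₂₃,β₃₃) ∩ (t²,β₁₂,β₂₂²,β₂₃,β₃₃). -/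
namespace Stmt9

noncomputable def t : MvPolynomial (Fin 6) ℂ := MvPolynomial.X 0
noncomputable def b12 : MvPolynomial (Fin 6) ℂ := MvPolynomial.X 1
noncomputable def b13 : MvPolynomial (Fin 6) ℂ := MvPolynomial.X 2
noncomputable def b22 : MvPolynomial (Fin 6) ℂ := MvPolynomial.X 3
noncomputable def b23 : MvPolynomial (Fin 6) ℂ := MvPolynomial.X 4
noncomputable def b33 : MvPolynomial (Fin 6) ℂ := MvPolynomial.X 5

open MvPolynomial Finsupp

private lemma le2 {i j : Fin 6} {a b : ℕ} {m : Fin 6 →₀ ℕ} (hij : i ≠ j) :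
    single i a + single j b ≤ m ↔ a ≤ m i ∧ b ≤ m j := by
  constructor
  · intro h
    refine ⟨?_, ?_⟩
    · have := Finsupp.le_def.mp h i; simpa [Finsupp.single_apply, hij.symm] using this
    · have := Finsupp.le_def.mp h j; simpa [Finsupp.single_apply, hij] using this
  · rintro ⟨h1, h2⟩
    rw [Finsupp.le_def]; intro x
    rcases eq_or_ne x i with rfl | hxi
    · simpa [Finsupp.single_apply, hij.symm] using h1
    rcases eq_or_ne x j with rfl | hxj
    · simpa [Finsupp.single_apply, hij] using h2
    · simp [Finsupp.single_apply, Ne.symm hxi, Ne.symm hxj]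

private lemma le3 {i j k : Fin 6} {a b c : ℕ} {m : Fin 6 →₀ ℕ} (hij : i ≠ j) (hik : i ≠ k)
    (hjk : j ≠ k) :
    single i a + single j b + single k c ≤ m ↔ a ≤ m i ∧ b ≤ m j ∧ c ≤ m k := by
  constructor
  · intro h
    refine ⟨?_, ?_, ?_⟩
    · have := Finsupp.le_def.mp h i; simpa [Finsupp.single_apply, hij.symm, hik.symm] using this
    · have := Finsupp.le_def.mp h j; simpa [Finsupp.single_apply, hij, hjk.symm] using this
    · have := Finsupp.le_def.mp h k; simpa [Finsupp.single_apply, hik, hjk] using this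
  · rintro ⟨h1, h2, h3⟩
    rw [Finsupp.le_def]; intro x
    rcases eq_or_ne x i with rfl | hxi
    · simpa [Finsupp.single_apply, hij.symm, hik.symm] using h1
    rcases eq_or_ne x j with rfl | hxj
    · simpa [Finsupp.single_apply, hij, hjk.symm] using h2
    rcases eq_or_ne x k with rfl | hxk
    · simpa [Finsupp.single_apply, hik, hjk] using h3
    · simp [Finsupp.single_apply, Ne.symm hxi, Ne.symm hxj, Ne.symm hxk]

private lemma hX (i : Fin 6) : (X i : MvPolynomial (Fin 6) ℂ) = monomial (single i 1) 1 := by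
  rw [← pow_one (X i), X_pow_eq_monomial]

private lemma key (m : Fin 6 →₀ ℕ) :
    (∃ s ∈ ({single 3 1 + single 5 1, single 5 1 + single 0 1, single 3 2 + single 0 1,
        single 4 1 + single 0 1, single 1 1 + single 3 1 + single 0 1,
        single 3 1 + single 0 2, single 0 3} : Set (Fin 6 →₀ ℕ)), s ≤ m) ↔
      ((∃ s ∈ ({single 0 1, single 3 1} : Set (Fin 6 →₀ ℕ)), s ≤ m) ∧
        (∃ s ∈ ({single 0 1, single 5 1} : Set (Fin 6 →₀ ℕ)), s ≤ m) ∧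
        (∃ s ∈ ({single 0 3, single 3 1, single 4 1, single 5 1} : Set (Fin 6 →₀ ℕ)), s ≤ m) ∧
        (∃ s ∈ ({single 0 2, single 1 1, single 3 2, single 4 1, single 5 1} :
          Set (Fin 6 →₀ ℕ)), s ≤ m)) := by
  simp only [Set.mem_insert_iff, Set.mem_singleton_iff, exists_eq_or_imp, exists_eq_left]
  rw [le2 (by decide), le2 (by decide), le2 (by decide), le2 (by decide),
    le3 (by decide) (by decide) (by decide), le2 (by decide)]
  simp only [Finsupp.single_le_iff]
  omega

/-!
STATEMENT 9: In `ℂ[t, β₁₂, β₁₃, β₂₂, β₂₃, β₃₃]`, the monomial ideal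
`M = (β₂₂β₃₃, β₃₃t, β₂₂²t, β₂₃t, β₁₂β₂₂t, β₂₂t², t³)` has primary decomposition
`M = (t,β₂₂) ∩ (t,β₃₃) ∩ (t³,β₂₂,β₂₃,β₃₃) ∩ (t²,β₁₂,β₂₂²,β₂₃,β₃₃)`.
-/
theorem primary_decomposition_k3 :
    Ideal.span ({b22 * b33, b33 * t, b22 ^ 2 * t, b23 * t, b12 * b22 * t,
        b22 * t ^ 2, t ^ 3} : Set (MvPolynomial (Fin 6) ℂ))
      = Ideal.span ({t, b22} : Set (MvPolynomial (Fin 6) ℂ))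
          ⊓ Ideal.span ({t, b33} : Set (MvPolynomial (Fin 6) ℂ))
          ⊓ Ideal.span ({t ^ 3, b22, b23, b33} : Set (MvPolynomial (Fin 6) ℂ))
          ⊓ Ideal.span ({t ^ 2, b12, b22 ^ 2, b23, b33} : Set (MvPolynomial (Fin 6) ℂ)) := by
  have e1 : ({b22 * b33, b33 * t, b22 ^ 2 * t, b23 * t, b12 * b22 * t, b22 * t ^ 2, t ^ 3} :
      Set (MvPolynomial (Fin 6) ℂ)) =
      (fun s => monomial s (1 : ℂ)) '' {single 3 1 + single 5 1, single 5 1 + single 0 1,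
        single 3 2 + single 0 1, single 4 1 + single 0 1,
        single 1 1 + single 3 1 + single 0 1, single 3 1 + single 0 2, single 0 3} := by
    simp only [Set.image_insert_eq, Set.image_singleton]
    rw [t, b12, b22, b23, b33]
    simp only [hX, X_pow_eq_monomial, monomial_pow, Finsupp.smul_single, smul_eq_mul, mul_one, one_pow, monomial_mul, one_mul]
  have e2 : ({t, b22} : Set (MvPolynomial (Fin 6) ℂ)) =
      (fun s => monomial s (1 : ℂ)) '' {single 0 1, single 3 1} := by
    simp only [Set.image_insert_eq, Set.image_singleton]
    rw [t, b22]; simp only [hX]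
  have e3 : ({t, b33} : Set (MvPolynomial (Fin 6) ℂ)) =
      (fun s => monomial s (1 : ℂ)) '' {single 0 1, single 5 1} := by
    simp only [Set.image_insert_eq, Set.image_singleton]
    rw [t, b33]; simp only [hX]
  have e4 : ({t ^ 3, b22, b23, b33} : Set (MvPolynomial (Fin 6) ℂ)) =
      (fun s => monomial s (1 : ℂ)) '' {single 0 3, single 3 1, single 4 1, single 5 1} := by
    simp only [Set.image_insert_eq, Set.image_singleton]
    rw [t, b22, b23, b33]
    simp only [hX, X_pow_eq_monomial, monomial_pow, Finsupp.smul_single, smul_eq_mul, mul_one, one_pow]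
  have e5 : ({t ^ 2, b12, b22 ^ 2, b23, b33} : Set (MvPolynomial (Fin 6) ℂ)) =
      (fun s => monomial s (1 : ℂ)) ''
        {single 0 2, single 1 1, single 3 2, single 4 1, single 5 1} := by
    simp only [Set.image_insert_eq, Set.image_singleton]
    rw [t, b12, b22, b23, b33]
    simp only [hX, X_pow_eq_monomial, monomial_pow, Finsupp.smul_single, smul_eq_mul, mul_one, one_pow]
  ext x
  rw [e1, e2, e3, e4, e5]
  simp only [Submodule.mem_inf, mem_ideal_span_monomial_image]
  constructor
  · intro h
    exact ⟨⟨⟨fun m hm => ((key m).mp (h m hm)).1, fun m hm => ((key m).mp (h m hm)).2.1⟩,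
      fun m hm => ((key m).mp (h m hm)).2.2.1⟩, fun m hm => ((key m).mp (h m hm)).2.2.2⟩
  · rintro ⟨⟨⟨h1, h2⟩, h3⟩, h4⟩ m hm
    exact (key m).mpr ⟨h1 m hm, h2 m hm, h3 m hm, h4 m hm⟩

end Stmt9
end

section
/- In the polynomial ring ℂ[t, β₁₂, β₂₂, β₂₃, β₃₃] (with remaining variables as parameters), the ideal (β₂₂β₃₃, tβ₃₃, β₂₂², β₂₃, β₁₂β₂₂, tβ₂₂, t²) equals the intersection (t,β₂₂,β₂₃) ∩ (t²,β₂₂,β₂₃,β₃₃) ∩ (t,β₁₂,β₂₂²,β₂₃,β₃₃). -/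
namespace Stmt10

noncomputable def t : MvPolynomial (Fin 5) ℂ := MvPolynomial.X 0
noncomputable def b12 : MvPolynomial (Fin 5) ℂ := MvPolynomial.X 1
noncomputable def b22 : MvPolynomial (Fin 5) ℂ := MvPolynomial.X 2
noncomputable def b23 : MvPolynomial (Fin 5) ℂ := MvPolynomial.X 3
noncomputable def b33 : MvPolynomial (Fin 5) ℂ := MvPolynomial.X 4

open MvPolynomial Finsupp

lemma Xmul (i j : Fin 5) : (X i * X j : MvPolynomial (Fin 5) ℂ)
    = monomial (Finsupp.single i 1 + Finsupp.single j 1) 1 := by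
  rw [← pow_one (X i), ← pow_one (X j), X_pow_eq_monomial, X_pow_eq_monomial,
    monomial_mul, mul_one]

lemma X1 (i : Fin 5) : (X i : MvPolynomial (Fin 5) ℂ) = monomial (Finsupp.single i 1) 1 := by
  rw [← pow_one (X i), X_pow_eq_monomial]

lemma pair_le {i j : Fin 5} (h : i ≠ j) (a b : ℕ) (m : Fin 5 →₀ ℕ) :
    Finsupp.single i a + Finsupp.single j b ≤ m ↔ a ≤ m i ∧ b ≤ m j := by
  rw [Finsupp.le_def]
  constructor
  · intro H
    have hi := H i
    have hj := H j
    simp [Finsupp.single_apply, h, h.symm] at hi hj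
    exact ⟨hi, hj⟩
  · rintro ⟨ha, hb⟩ x
    simp only [Finsupp.add_apply, Finsupp.single_apply]
    by_cases hx : i = x <;> by_cases hy : j = x <;>
      simp_all <;> omega

theorem primary_decomposition_k3_second :
    Ideal.span ({b22 * b33, t * b33, b22 ^ 2, b23, b12 * b22, t * b22, t ^ 2} :
        Set (MvPolynomial (Fin 5) ℂ))
      = Ideal.span ({t, b22, b23} : Set (MvPolynomial (Fin 5) ℂ))
          ⊓ Ideal.span ({t ^ 2, b22, b23, b33} : Set (MvPolynomial (Fin 5) ℂ))
          ⊓ Ideal.span ({t, b12, b22 ^ 2, b23, b33} : Set (MvPolynomial (Fin 5) ℂ)) := by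
  have eL : ({b22 * b33, t * b33, b22 ^ 2, b23, b12 * b22, t * b22, t ^ 2} :
      Set (MvPolynomial (Fin 5) ℂ))
      = (fun s => monomial s (1:ℂ)) ''
        {Finsupp.single 2 1 + Finsupp.single 4 1, Finsupp.single 0 1 + Finsupp.single 4 1,
         Finsupp.single 2 2, Finsupp.single 3 1, Finsupp.single 1 1 + Finsupp.single 2 1,
         Finsupp.single 0 1 + Finsupp.single 2 1, Finsupp.single 0 2} := by
    simp only [Set.image_insert_eq, Set.image_singleton, t, b12, b22, b23, b33,
      ← Xmul, ← X1, ← X_pow_eq_monomial, pow_one]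
  have eA : ({t, b22, b23} : Set (MvPolynomial (Fin 5) ℂ))
      = (fun s => monomial s (1:ℂ)) ''
        {Finsupp.single 0 1, Finsupp.single 2 1, Finsupp.single 3 1} := by
    simp only [Set.image_insert_eq, Set.image_singleton, t, b22, b23, ← X1, pow_one]
  have eB : ({t ^ 2, b22, b23, b33} : Set (MvPolynomial (Fin 5) ℂ))
      = (fun s => monomial s (1:ℂ)) ''
        {Finsupp.single 0 2, Finsupp.single 2 1, Finsupp.single 3 1, Finsupp.single 4 1} := by
    simp only [Set.image_insert_eq, Set.image_singleton, t, b22, b23, b33, ← X1, pow_one,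
      ← X_pow_eq_monomial]
  have eC : ({t, b12, b22 ^ 2, b23, b33} : Set (MvPolynomial (Fin 5) ℂ))
      = (fun s => monomial s (1:ℂ)) ''
        {Finsupp.single 0 1, Finsupp.single 1 1, Finsupp.single 2 2,
         Finsupp.single 3 1, Finsupp.single 4 1} := by
    simp only [Set.image_insert_eq, Set.image_singleton, t, b12, b22, b23, b33, ← X1, pow_one,
      ← X_pow_eq_monomial]
  ext p
  rw [Ideal.mem_inf, Ideal.mem_inf, eL, eA, eB, eC,
    mem_ideal_span_monomial_image, mem_ideal_span_monomial_image,
    mem_ideal_span_monomial_image, mem_ideal_span_monomial_image]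
  have key : ∀ m : Fin 5 →₀ ℕ,
      ((∃ s ∈ ({Finsupp.single 2 1 + Finsupp.single 4 1, Finsupp.single 0 1 + Finsupp.single 4 1,
         Finsupp.single 2 2, Finsupp.single 3 1, Finsupp.single 1 1 + Finsupp.single 2 1,
         Finsupp.single 0 1 + Finsupp.single 2 1, Finsupp.single 0 2} : Set (Fin 5 →₀ ℕ)), s ≤ m)
      ↔ (∃ s ∈ ({Finsupp.single 0 1, Finsupp.single 2 1, Finsupp.single 3 1} :
            Set (Fin 5 →₀ ℕ)), s ≤ m)
        ∧ (∃ s ∈ ({Finsupp.single 0 2, Finsupp.single 2 1, Finsupp.single 3 1,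
            Finsupp.single 4 1} : Set (Fin 5 →₀ ℕ)), s ≤ m)
        ∧ (∃ s ∈ ({Finsupp.single 0 1, Finsupp.single 1 1, Finsupp.single 2 2,
            Finsupp.single 3 1, Finsupp.single 4 1} : Set (Fin 5 →₀ ℕ)), s ≤ m)) := by
    intro m
    simp only [Set.mem_insert_iff, Set.mem_singleton_iff, exists_eq_or_imp, exists_eq_left,
      Finsupp.single_le_iff, pair_le (by decide : (2:Fin 5) ≠ 4),
      pair_le (by decide : (0:Fin 5) ≠ 4), pair_le (by decide : (1:Fin 5) ≠ 2),
      pair_le (by decide : (0:Fin 5) ≠ 2)]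
    omega
  constructor
  · intro h
    refine ⟨⟨fun m hm => ((key m).mp (h m hm)).1, fun m hm => ((key m).mp (h m hm)).2.1⟩,
      fun m hm => ((key m).mp (h m hm)).2.2⟩
  · rintro ⟨⟨hA, hB⟩, hC⟩ m hm
    exact (key m).mpr ⟨hA m hm, hB m hm, hC m hm⟩

end Stmt10
end

section
/- A point ξ of the punctual Hilbert scheme Hilb^k₀(ℂⁿ) (length-k subschemes supported at the origin) fails to be curvilinear if and only if its defining ideal I_ξ contains the power (x₁,...,x_n)^{k−1} of the maximal ideal; equivalently, the local algebra O_ξ has no element of degree k−1. Consequently, the curvilinear locus is open in Hilb^k₀(ℂⁿ) within its closure, and its closure is an irreducible component of Hilb^k₀(ℂⁿ). -/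
/-!
Let `A = ℂ[[x]]/I` with maximal ideal `𝔪`. As `A` is Artinian, the powers of `𝔪` strictly
decrease until they vanish. So if `𝔪^{k-1} ≠ 0`, the chain `A ⊋ 𝔪 ⊋ ⋯ ⊋ 𝔪^{k-1} ⊋ 0`
in the `k`-dimensional space `A` loses exactly one dimension at each step; in particular
`dim 𝔪/𝔪² = 1`, and Nakayama makes `𝔪 = (t)` principal, with `t^{k-1} ≠ 0`.
If `p(t) = 0` with `p = X^r q`, `q(0) ≠ 0`, then `q(t)` is a unit and `t^r = 0`, so `r ≥ k`.
Hence `ℂ[X]/(X^k) → A`, `X ↦ t`, is injective, and an isomorphism by counting dimensions.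
Conversely, an isomorphism sends `X` to a nilpotent, hence to an element of `𝔪` whose
`(k-1)`-st power is nonzero.
-/

open Polynomial IsLocalRing Module

theorem Ideal.pow_succ_lt_pow_of_isNilpotent {R : Type*} [CommRing R] {J : Ideal R}
    (hJ : IsNilpotent J) {i : ℕ} (hi : J ^ i ≠ ⊥) : J ^ (i + 1) < J ^ i := by
  refine lt_of_le_of_ne (Ideal.pow_le_pow_right i.le_succ) fun h => hi ?_
  obtain ⟨N, hN⟩ := hJ
  have stable : ∀ j, J ^ (i + j) = J ^ i := by
    intro j
    induction j with
    | zero => rfl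
    | succ j ih => rw [← add_assoc, add_right_comm, pow_add, h, ← pow_add, ih]
  rw [← stable N, pow_add, hN, mul_zero, Ideal.zero_eq_bot]

namespace IsLocalRing

variable {F A : Type*} [Field F] [CommRing A] [Algebra F A] [IsLocalRing A]

section FiniteDimensional

variable [FiniteDimensional F A]

theorem finrank_maximalIdeal_pow_succ_lt {i : ℕ} (hi : maximalIdeal A ^ i ≠ ⊥) :
    finrank F ((maximalIdeal A ^ (i + 1)).restrictScalars F) <
      finrank F ((maximalIdeal A ^ i).restrictScalars F) :=
  have := IsArtinianRing.of_finite F A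
  have := IsNoetherianRing.of_finite F A
  Submodule.finrank_lt_finrank_of_lt <| (Submodule.restrictScalars_lt F).mpr <|
    Ideal.pow_succ_lt_pow_of_isNilpotent
      ((isArtinianRing_iff_isNilpotent_maximalIdeal A).mp inferInstance) hi

theorem add_one_le_finrank_maximalIdeal_pow_add {K i : ℕ} (hK : maximalIdeal A ^ K ≠ ⊥)
    (hi : i ≤ K) : K + 1 ≤ finrank F ((maximalIdeal A ^ i).restrictScalars F) + i := by
  obtain ⟨j, rfl⟩ := Nat.exists_eq_add_of_le hi
  induction j generalizing i with
  | zero =>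
    have : finrank F ((maximalIdeal A ^ i).restrictScalars F) ≠ 0 := by
      rwa [Ne, Submodule.finrank_eq_zero, Submodule.restrictScalars_eq_bot_iff]
    omega
  | succ j ih =>
    have hi' : maximalIdeal A ^ i ≠ ⊥ :=
      ne_bot_of_le_ne_bot hK (Ideal.pow_le_pow_right (Nat.le_add_right i _))
    have := ih (i := i + 1) (by rwa [add_right_comm]) (by omega)
    have := finrank_maximalIdeal_pow_succ_lt (F := F) hi'
    omega

theorem finrank_maximalIdeal_le_finrank_sq_add_one {K : ℕ} (hA : finrank F A = K + 1)
    (hK : maximalIdeal A ^ K ≠ ⊥) :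
    finrank F ((maximalIdeal A).restrictScalars F) ≤
      finrank F ((maximalIdeal A ^ 2).restrictScalars F) + 1 := by
  have : finrank F ((maximalIdeal A).restrictScalars F) < finrank F A := by
    refine Submodule.finrank_lt ?_
    rw [Ne, ← Submodule.restrictScalars_top F A A, Submodule.restrictScalars_inj]
    exact (maximalIdeal.isMaximal A).ne_top
  rcases le_or_gt 2 K with h2 | h2
  · have := add_one_le_finrank_maximalIdeal_pow_add (F := F) hK h2
    omega
  · omega

theorem isPrincipal_maximalIdeal_of_pow_ne_bot {K : ℕ} (hA : finrank F A = K + 1)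
    (hK : maximalIdeal A ^ K ≠ ⊥) : (maximalIdeal A).IsPrincipal := by
  have := IsArtinianRing.of_finite F A
  have := IsNoetherianRing.of_finite F A
  by_cases hm : maximalIdeal A = ⊥
  · rw [hm]; infer_instance
  have hm2 : maximalIdeal A ^ 2 < maximalIdeal A := by
    simpa using Ideal.pow_succ_lt_pow_of_isNilpotent
      ((isArtinianRing_iff_isNilpotent_maximalIdeal A).mp inferInstance) (i := 1)
      (by simpa using hm)
  obtain ⟨t, htm, htm2⟩ := SetLike.exists_of_lt hm2
  set S := F ∙ t ⊔ (maximalIdeal A ^ 2).restrictScalars F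
  have hS : S = (maximalIdeal A).restrictScalars F := by
    refine Submodule.eq_of_le_of_finrank_le (sup_le ?_ ?_) ?_
    · exact (Submodule.span_singleton_le_iff_mem _ _).mpr htm
    · exact (Submodule.restrictScalars_le F).mpr hm2.le
    · have : (maximalIdeal A ^ 2).restrictScalars F < S :=
        lt_of_le_of_ne le_sup_right fun h =>
          htm2 (h ▸ Submodule.mem_sup_left (Submodule.mem_span_singleton_self t) :
            t ∈ (maximalIdeal A ^ 2).restrictScalars F)
      have := Submodule.finrank_lt_finrank_of_lt this
      have := finrank_maximalIdeal_le_finrank_sq_add_one hA hK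
      omega
  refine ⟨t, le_antisymm ?_ ((Ideal.span_singleton_le_iff_mem _).mpr htm)⟩
  refine Submodule.le_of_le_smul_of_le_jacobson_bot (Ideal.fg_of_isNoetherianRing _)
    (maximalIdeal_le_jacobson ⊥) fun x hx => ?_
  rw [← Submodule.restrictScalars_mem F, ← hS, Submodule.mem_sup] at hx
  obtain ⟨y, hy, z, hz, rfl⟩ := hx
  obtain ⟨c, rfl⟩ := Submodule.mem_span_singleton.mp hy
  refine Submodule.add_mem_sup ?_ ?_
  · rw [Algebra.smul_def]
    exact Ideal.mul_mem_left _ _ (Ideal.mem_span_singleton_self t)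
  · rwa [Submodule.restrictScalars_mem, sq, ← Ideal.smul_eq_mul] at hz

end FiniteDimensional

theorem pow_natTrailingDegree_eq_zero_of_aeval_eq_zero {t : A} (ht : t ∈ maximalIdeal A)
    {p : F[X]} (hp : p ≠ 0) (h : aeval t p = 0) : t ^ p.natTrailingDegree = 0 := by
  rw [← rootMultiplicity_eq_natTrailingDegree']
  set q := p /ₘ (X - C 0) ^ p.rootMultiplicity 0
  have hq : IsUnit (aeval t q) := by
    rw [← residue_ne_zero_iff_isUnit, ← ResidueField.algebraMap_eq, ← aeval_algebraMap_apply,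
      ResidueField.algebraMap_eq, (residue_eq_zero_iff t).mpr ht, ← coeff_zero_eq_aeval_zero',
      coeff_zero_eq_eval_zero, ne_eq, map_eq_zero]
    exact eval_divByMonic_pow_rootMultiplicity_ne_zero 0 hp
  have := congrArg (aeval t) (pow_mul_divByMonic_rootMultiplicity_eq p 0)
  rw [map_mul, map_pow, h, map_sub, aeval_X, aeval_C, map_zero, sub_zero] at this
  exact hq.mul_left_eq_zero.mp this

theorem pow_finrank_eq_zero_of_mem_maximalIdeal [FiniteDimensional F A] {t : A}
    (ht : t ∈ maximalIdeal A) : t ^ finrank F A = 0 :=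
  pow_eq_zero_of_le ((natTrailingDegree_le_natDegree _).trans (minpoly.natDegree_le t))
    (pow_natTrailingDegree_eq_zero_of_aeval_eq_zero ht
      (minpoly.ne_zero (Algebra.IsIntegral.isIntegral t)) (minpoly.aeval F t))

theorem nonempty_algEquiv_of_pow_ne_zero {K : ℕ} (hA : finrank F A = K + 1) {t : A}
    (ht : t ∈ maximalIdeal A) (htK : t ^ K ≠ 0) :
    Nonempty (A ≃ₐ[F] F[X] ⧸ Ideal.span {(X : F[X]) ^ (K + 1)}) := by
  have := Module.finite_of_finrank_pos (by omega : 0 < finrank F A)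
  let ψ : F[X] ⧸ Ideal.span {(X : F[X]) ^ (K + 1)} →ₐ[F] A :=
    Ideal.Quotient.liftₐ _ (aeval t) fun p hp => by
      obtain ⟨q, rfl⟩ := Ideal.mem_span_singleton'.mp hp
      rw [map_mul, map_pow, aeval_X, ← hA, pow_finrank_eq_zero_of_mem_maximalIdeal ht, mul_zero]
  have hinj : Function.Injective ψ := by
    refine (injective_iff_map_eq_zero ψ).mpr fun a ha => ?_
    obtain ⟨p, rfl⟩ := Ideal.Quotient.mk_surjective a
    rw [Ideal.Quotient.eq_zero_iff_mem, Ideal.mem_span_singleton, X_pow_dvd_iff]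
    intro d hd
    by_cases hp : p = 0
    · rw [hp, coeff_zero]
    refine coeff_eq_zero_of_lt_natTrailingDegree (lt_of_lt_of_le hd ?_)
    by_contra! hlt
    exact htK (pow_eq_zero_of_le (Nat.le_of_lt_succ hlt)
      (pow_natTrailingDegree_eq_zero_of_aeval_eq_zero ht hp ha))
  have hdim : finrank F (F[X] ⧸ Ideal.span {(X : F[X]) ^ (K + 1)}) = finrank F A :=
    (AdjoinRoot.powerBasis' (monic_X_pow (R := F) (K + 1))).finrank.trans
      ((natDegree_X_pow _).trans hA.symm)
  have := Module.finite_of_finrank_pos (R := F) (M := F[X] ⧸ Ideal.span {(X : F[X]) ^ (K + 1)})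
    (by omega)
  have hsurj : Function.Surjective ψ :=
    (LinearMap.injective_iff_surjective_of_finrank_eq_finrank hdim (f := ψ.toLinearMap)).mp hinj
  exact ⟨(AlgEquiv.ofBijective ψ ⟨hinj, hsurj⟩).symm⟩

theorem maximalIdeal_pow_ne_bot_of_algEquiv {K : ℕ}
    (e : A ≃ₐ[F] F[X] ⧸ Ideal.span {(X : F[X]) ^ (K + 1)}) : maximalIdeal A ^ K ≠ ⊥ := by
  set t := e.symm (Ideal.Quotient.mk _ X)
  have pow_t_eq_zero_iff (j : ℕ) : t ^ j = 0 ↔ K + 1 ≤ j := by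
    rw [← map_pow, map_eq_zero_iff _ e.symm.injective, ← map_pow,
      Ideal.Quotient.eq_zero_iff_mem, Ideal.mem_span_singleton,
      pow_dvd_pow_iff X_ne_zero not_isUnit_X]
  have ht : t ∈ maximalIdeal A :=
    (mem_maximalIdeal t).mpr (IsNilpotent.not_isUnit ⟨K + 1, (pow_t_eq_zero_iff _).mpr le_rfl⟩)
  intro h
  have := (pow_t_eq_zero_iff K).mp (by simpa [h] using Ideal.pow_mem_pow ht K)
  omega

theorem nonempty_algEquiv_quotient_X_pow_iff {K : ℕ} (hA : finrank F A = K + 1) :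
    Nonempty (A ≃ₐ[F] F[X] ⧸ Ideal.span {(X : F[X]) ^ (K + 1)}) ↔
      maximalIdeal A ^ K ≠ ⊥ := by
  refine ⟨fun ⟨e⟩ => maximalIdeal_pow_ne_bot_of_algEquiv e, fun hK => ?_⟩
  have := Module.finite_of_finrank_pos (by omega : 0 < finrank F A)
  obtain ⟨t, ht⟩ := (isPrincipal_maximalIdeal_of_pow_ne_bot hA hK).principal
  refine nonempty_algEquiv_of_pow_ne_zero hA (ht ▸ Submodule.mem_span_singleton_self t)
    fun htK => ?_
  rw [ht, Ideal.submodule_span_eq, Ideal.span_singleton_pow, htK] at hK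
  exact hK (Ideal.span_singleton_eq_bot.mpr rfl)

end IsLocalRing

theorem IsLocalRing.maximalIdeal_quotient_pow_eq_bot_iff {R : Type*} [CommRing R] [IsLocalRing R]
    (I : Ideal R) [IsLocalRing (R ⧸ I)] (K : ℕ) :
    maximalIdeal (R ⧸ I) ^ K = ⊥ ↔ maximalIdeal R ^ K ≤ I := by
  rw [← map_maximalIdeal_of_surjective _ Ideal.Quotient.mk_surjective, ← Ideal.map_pow,
    Ideal.map_eq_bot_iff_le_ker, Ideal.mk_ker]

theorem curvilinear_iff_not_contains_power_general (n k : ℕ) (hk : 1 ≤ k)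
    (I : Ideal (MvPowerSeries (Fin n) ℂ))
    (hlen : Module.finrank ℂ (MvPowerSeries (Fin n) ℂ ⧸ I) = k) :
    Nonempty ((MvPowerSeries (Fin n) ℂ ⧸ I) ≃ₐ[ℂ]
        (Polynomial ℂ ⧸ Ideal.span {(Polynomial.X : Polynomial ℂ) ^ k}))
      ↔ ¬ ((RingHom.ker ((MvPowerSeries.constantCoeff : MvPowerSeries (Fin n) ℂ →+* ℂ))) ^ (k - 1) ≤ I) := by
  obtain ⟨K, rfl⟩ := Nat.exists_eq_add_of_le' hk
  have := Module.nontrivial_of_finrank_eq_succ hlen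
  have : IsLocalRing (MvPowerSeries (Fin n) ℂ ⧸ I) :=
    .of_surjective' _ Ideal.Quotient.mk_surjective
  rw [Nat.add_sub_cancel,
    IsLocalRing.ker_eq_maximalIdeal _ fun c => ⟨MvPowerSeries.C c, by simp⟩,
    ← IsLocalRing.maximalIdeal_quotient_pow_eq_bot_iff]
  exact IsLocalRing.nonempty_algEquiv_quotient_X_pow_iff hlen

theorem curvilinear_iff_not_contains_power (n k : ℕ) (hk : 1 ≤ k)
    (I : Ideal (MvPowerSeries (Fin n) ℂ))
    (hIm : I ≤ RingHom.ker ((MvPowerSeries.constantCoeff : MvPowerSeries (Fin n) ℂ →+* ℂ)))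
    (hlen : Module.finrank ℂ (MvPowerSeries (Fin n) ℂ ⧸ I) = k) :
    Nonempty ((MvPowerSeries (Fin n) ℂ ⧸ I) ≃ₐ[ℂ]
        (Polynomial ℂ ⧸ Ideal.span {(Polynomial.X : Polynomial ℂ) ^ k}))
      ↔ ¬ ((RingHom.ker ((MvPowerSeries.constantCoeff : MvPowerSeries (Fin n) ℂ →+* ℂ))) ^ (k - 1) ≤ I) :=
  curvilinear_iff_not_contains_power_general n k hk I hlen
end

section
/- For γ ∈ J_k^{reg}(1,n) and N ≥ n, the solution space S_γ^{i,N} = {Ψ ∈ J_k(n,N) : Ψ∘γ = 0 up to order i} is a linear subspace of codimension iN in J_k(n,N), and its annihilator satisfies (S_γ^{i,N})^⊥ = (S_γ^{i,1})^⊥ ⊗ ℂ^N. -/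
noncomputable section

/-- `J_k(n,1)`: polynomials in `n` variables of total degree `≤ k` with no constant term. -/
def jetSub (n k : ℕ) : Submodule ℂ (MvPolynomial (Fin n) ℂ) :=
  MvPolynomial.restrictTotalDegree (Fin n) ℂ k ⊓
    LinearMap.ker (MvPolynomial.aeval (fun _ : Fin n => (0 : ℂ))).toLinearMap

/-- The solution space `S_γ^{i,1} = {Ψ ∈ J_k(n,1) : Ψ∘γ = 0 up to order i}`. -/
def solSub (n k i : ℕ) (γ : Fin n → Polynomial ℂ) : Submodule ℂ (MvPolynomial (Fin n) ℂ) :=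
  jetSub n k ⊓ ⨅ m ∈ Finset.Icc 1 i,
    LinearMap.ker ((Polynomial.lcoeff ℂ m).comp (MvPolynomial.aeval γ).toLinearMap)

/-- `J_k(n,N) = J_k(n,1) ⊗ ℂ^N`. -/
def jetSubN (n k N : ℕ) : Submodule ℂ (Fin N → MvPolynomial (Fin n) ℂ) :=
  Submodule.pi Set.univ fun _ => jetSub n k

/-- The solution space `S_γ^{i,N} = {Ψ ∈ J_k(n,N) : Ψ∘γ = 0 up to order i}`. -/
def solSubN (n k i N : ℕ) (γ : Fin n → Polynomial ℂ) :
    Submodule ℂ (Fin N → MvPolynomial (Fin n) ℂ) :=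
  jetSubN n k N ⊓ ⨅ (a : Fin N), ⨅ m ∈ Finset.Icc 1 i,
    LinearMap.ker ((Polynomial.lcoeff ℂ m).comp
      ((MvPolynomial.aeval γ).toLinearMap.comp (LinearMap.proj a)))

/-- The canonical equivalence between a product of submodules and the pi submodule. -/
def piSubEquiv {R : Type*} [CommRing R] {ι : Type*}
    {M : ι → Type*} [∀ a, AddCommGroup (M a)] [∀ a, Module R (M a)]
    (p : ∀ a, Submodule R (M a)) :
    (Submodule.pi Set.univ p) ≃ₗ[R] (∀ a, p a) where
  toFun x a := ⟨x.1 a, x.2 a trivial⟩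
  map_add' _ _ := rfl
  map_smul' _ _ := rfl
  invFun f := ⟨fun a => f a, fun a _ => (f a).2⟩
  left_inv _ := rfl
  right_inv _ := rfl

theorem dualAnnihilator_pi {R : Type*} [Field R] {ι : Type*} [Fintype ι] [DecidableEq ι]
    {M : Type*} [AddCommGroup M] [Module R M] (p : ι → Submodule R M) :
    (Submodule.pi Set.univ p).dualAnnihilator
      = Submodule.map (LinearMap.lsum R (fun _ : ι => M) R).toLinearMap
          (Submodule.pi Set.univ fun a => (p a).dualAnnihilator) := by
  ext f
  simp only [Submodule.mem_dualAnnihilator, Submodule.mem_map, Submodule.mem_pi,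
    Set.mem_univ, forall_true_left]
  constructor
  · intro hf
    refine ⟨fun a => f.comp (LinearMap.single R (fun _ => M) a), ?_, ?_⟩
    · intro a
      intro x hx
      have hmem : (Pi.single a x : ι → M) ∈ Submodule.pi Set.univ p := by
        intro b _
        rcases eq_or_ne b a with rfl | h
        · simpa using hx
        · simp [Pi.single_eq_of_ne h]
      simpa using hf _ (fun b => hmem b trivial)
    · apply LinearMap.ext
      intro x
      simp only [LinearEquiv.coe_coe, LinearMap.lsum_apply, LinearMap.coe_sum,
        LinearMap.coe_comp, LinearMap.coe_proj, Finset.sum_apply, Function.comp_apply,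
        Function.eval, LinearMap.coe_single]
      rw [← map_sum]
      congr 1
      exact Finset.univ_sum_single x
  · rintro ⟨g, hg, rfl⟩ x hx
    simp only [LinearEquiv.coe_coe, LinearMap.lsum_apply, LinearMap.coe_sum,
      LinearMap.coe_comp, LinearMap.coe_proj, Finset.sum_apply, Function.comp_apply,
      Function.eval]
    refine Finset.sum_eq_zero fun a _ => ?_
    exact hg a (x a) (hx a)

theorem solSubN_eq_pi (n k i N : ℕ) (γ : Fin n → Polynomial ℂ) :
    solSubN n k i N γ = Submodule.pi Set.univ fun _ : Fin N => solSub n k i γ := by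
  ext x
  simp only [solSubN, solSub, jetSubN, Submodule.mem_inf, Submodule.mem_pi,
    Submodule.mem_iInf, Set.mem_univ, forall_true_left, LinearMap.mem_ker,
    LinearMap.comp_apply, LinearMap.proj_apply]
  constructor
  · rintro ⟨h1, h2⟩
    exact fun a => ⟨h1 a, fun m hm => h2 a m hm⟩
  · intro h
    exact ⟨fun a => (h a).1, fun a m hm => (h a).2 m hm⟩

instance jetSub_fd (n k : ℕ) : FiniteDimensional ℂ (jetSub n k) :=
  Submodule.finiteDimensional_of_le (inf_le_left :
    jetSub n k ≤ MvPolynomial.restrictTotalDegree (Fin n) ℂ k)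

theorem pow_coeff_lt {p : Polynomial ℂ} (hp : p.coeff 0 = 0) {m ℓ : ℕ} (h : ℓ < m) :
    (p ^ m).coeff ℓ = 0 := by
  obtain ⟨q, rfl⟩ := Polynomial.X_dvd_iff.mpr hp
  rw [mul_pow, (Commute.all _ _).eq, Polynomial.coeff_mul_X_pow']
  simp [Nat.not_le_of_lt h]

theorem pow_coeff_eq {p : Polynomial ℂ} (hp : p.coeff 0 = 0) (m : ℕ) :
    (p ^ m).coeff m = (p.coeff 1) ^ m := by
  obtain ⟨q, rfl⟩ := Polynomial.X_dvd_iff.mpr hp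
  rw [mul_pow, (Commute.all _ _).eq, Polynomial.coeff_mul_X_pow', if_pos le_rfl]
  simp only [Nat.sub_self]
  have h1 : (Polynomial.X * q).coeff 1 = q.coeff 0 := by
    simpa using Polynomial.coeff_X_mul q 0
  rw [h1, ← Polynomial.constantCoeff_apply, map_pow, Polynomial.constantCoeff_apply]

theorem finrank_solSub (n k i : ℕ) (hi : i ≤ k)
    (γ : Fin n → Polynomial ℂ) (hγ0 : ∀ j, (γ j).coeff 0 = 0)
    (hγreg : (fun j => (γ j).coeff 1) ≠ 0) :
    Module.finrank ℂ (solSub n k i γ) + i = Module.finrank ℂ (jetSub n k) := by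
  obtain ⟨j0, hc0⟩ := Function.ne_iff.mp hγreg
  have hc : (γ j0).coeff 1 ≠ 0 := by simpa using hc0
  -- the linear map collecting the coefficients 1,…,i of Ψ ∘ γ
  set L : MvPolynomial (Fin n) ℂ →ₗ[ℂ] (Fin i → ℂ) :=
    LinearMap.pi fun m : Fin i =>
      (Polynomial.lcoeff ℂ ((m : ℕ) + 1)).comp (MvPolynomial.aeval γ).toLinearMap with hL
  have hker : (⨅ m ∈ Finset.Icc 1 i,
      LinearMap.ker ((Polynomial.lcoeff ℂ m).comp (MvPolynomial.aeval γ).toLinearMap))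
        = LinearMap.ker L := by
    rw [hL, LinearMap.ker_pi]
    apply le_antisymm
    · refine le_iInf fun m => ?_
      refine iInf_le_of_le ((m : ℕ) + 1) (iInf_le_of_le ?_ le_rfl)
      simp [Finset.mem_Icc]
    · refine le_iInf₂ fun m hm => ?_
      simp only [Finset.mem_Icc] at hm
      have hlt : m - 1 < i := by omega
      have := iInf_le (fun j : Fin i =>
        LinearMap.ker ((Polynomial.lcoeff ℂ ((j : ℕ) + 1)).comp
          (MvPolynomial.aeval γ).toLinearMap)) ⟨m - 1, hlt⟩
      simpa [Nat.sub_add_cancel hm.1] using this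
  have hsol : solSub n k i γ = jetSub n k ⊓ LinearMap.ker L := by
    rw [solSub, hker]
  -- members (X j0)^(m+1) of the jet space
  have hw : ∀ m : Fin i, (MvPolynomial.X j0 ^ ((m : ℕ) + 1) : MvPolynomial (Fin n) ℂ)
      ∈ jetSub n k := by
    intro m
    refine Submodule.mem_inf.mpr ⟨?_, ?_⟩
    · rw [MvPolynomial.mem_restrictTotalDegree, MvPolynomial.totalDegree_X_pow]
      omega
    · simp [LinearMap.mem_ker]
  -- triangular matrix of values
  set M : Matrix (Fin i) (Fin i) ℂ := fun r m =>
    ((γ j0) ^ ((m : ℕ) + 1)).coeff ((r : ℕ) + 1) with hM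
  have hMtri : M.BlockTriangular OrderDual.toDual := by
    intro r m h
    have : (r : ℕ) + 1 < (m : ℕ) + 1 := by
      simpa using (OrderDual.toDual_lt_toDual.mp h)
    exact pow_coeff_lt (hγ0 j0) this
  have hMdet : M.det ≠ 0 := by
    rw [Matrix.det_of_lowerTriangular M hMtri]
    refine Finset.prod_ne_zero_iff.mpr fun m _ => ?_
    have : M m m = ((γ j0).coeff 1) ^ ((m : ℕ) + 1) := pow_coeff_eq (hγ0 j0) ((m : ℕ) + 1)
    rw [this]
    exact pow_ne_zero _ hc
  have hMsurj : Function.Surjective M.mulVec :=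
    Matrix.mulVec_surjective_iff_isUnit.mpr
      ((Matrix.isUnit_iff_isUnit_det M).mpr (Ne.isUnit hMdet))
  -- surjectivity of L restricted to the jet space
  set L' := L.domRestrict (jetSub n k) with hL'
  have hLw : ∀ m : Fin i, L (MvPolynomial.X j0 ^ ((m : ℕ) + 1)) = fun r => M r m := by
    intro m
    funext r
    simp [hL, hM, LinearMap.pi_apply, map_pow]
  have hsurj : Function.Surjective L' := by
    intro t
    obtain ⟨v, hv⟩ := hMsurj t
    refine ⟨⟨∑ m : Fin i, v m • MvPolynomial.X j0 ^ ((m : ℕ) + 1),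
      Submodule.sum_mem _ fun m _ => Submodule.smul_mem _ _ (hw m)⟩, ?_⟩
    rw [hL', LinearMap.domRestrict_apply]
    rw [map_sum]
    simp only [map_smul, hLw]
    funext r
    rw [← hv]
    simp [Matrix.mulVec, dotProduct]
    exact Finset.sum_congr rfl fun m _ => mul_comm _ _
  have hrange : LinearMap.range L' = ⊤ := LinearMap.range_eq_top.mpr hsurj
  have hrank := LinearMap.finrank_range_add_finrank_ker L'
  rw [hrange, finrank_top, Module.finrank_pi, Fintype.card_fin] at hrank
  -- identify the kernel of L' with solSub
  have hkerL' : LinearMap.ker L' = Submodule.comap (jetSub n k).subtype (solSub n k i γ) := by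
    rw [hL', LinearMap.ker_domRestrict, hsol, Submodule.comap_inf,
      Submodule.comap_subtype_self, top_inf_eq]
  have hfr : Module.finrank ℂ (solSub n k i γ) = Module.finrank ℂ (LinearMap.ker L') := by
    rw [hkerL']
    exact (Submodule.comapSubtypeEquivOfLe (hsol ▸ (inf_le_left :
      jetSub n k ⊓ LinearMap.ker L ≤ jetSub n k))).symm.finrank_eq
  rw [hfr]
  omega

theorem solution_space_codim_and_annihilator (n k i N : ℕ)
    (hn : 1 ≤ n) (hi : i ≤ k) (hN : n ≤ N)
    (γ : Fin n → Polynomial ℂ) (hγ0 : ∀ j, (γ j).coeff 0 = 0)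
    (hγdeg : ∀ j, (γ j).degree ≤ (k : ℕ))
    (hγreg : (fun j => (γ j).coeff 1) ≠ 0) :
    Module.finrank ℂ ↥(solSubN n k i N γ) + i * N
        = Module.finrank ℂ ↥(jetSubN n k N) ∧
      (solSubN n k i N γ).dualAnnihilator
        = Submodule.map
            (LinearMap.lsum ℂ (fun _ : Fin N => MvPolynomial (Fin n) ℂ) ℂ).toLinearMap
            (Submodule.pi Set.univ fun _ : Fin N => (solSub n k i γ).dualAnnihilator) := by
  have hpi := solSubN_eq_pi n k i N γ
  have hsol_fd : FiniteDimensional ℂ (solSub n k i γ) :=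
    Submodule.finiteDimensional_of_le (inf_le_left : solSub n k i γ ≤ jetSub n k)
  have h1 : Module.finrank ℂ (solSubN n k i N γ)
      = N * Module.finrank ℂ (solSub n k i γ) := by
    rw [hpi, (piSubEquiv fun _ : Fin N => solSub n k i γ).finrank_eq,
      Module.finrank_pi_fintype]
    simp [Finset.sum_const]
  have h2 : Module.finrank ℂ (jetSubN n k N) = N * Module.finrank ℂ (jetSub n k) := by
    rw [jetSubN, (piSubEquiv fun _ : Fin N => jetSub n k).finrank_eq,
      Module.finrank_pi_fintype]
    simp [Finset.sum_const]
  have hmain := finrank_solSub n k i hi γ hγ0 hγreg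
  constructor
  · rw [h1, h2, ← hmain]
    ring
  · rw [hpi]
    exact dualAnnihilator_pi _

end
end

section
/- For any homogeneous polynomial Q on ℂᵏ and distinct variables λ₁,...,λ_n (k ≤ n), the fixed-point sum Σ_{σ} Q(λ_{σ(1)},...,λ_{σ(k)}) / ∏_{m=1}^{k} ∏_{i=m+1}^{n} (λ_{σ(i)} − λ_{σ(m)}), where σ runs over ordered k-element subsets (injections {1,...,k} → {1,...,n} extended to permutations of {1,...,n} modulo permutations of the last n−k elements), equals the iterated residue at infinity Res_{𝐳=∞} [∏_{1≤m<l≤k}(z_m − z_l) · Q(𝐳) · d𝐳] / [∏_{l=1}^{k} ∏_{i=1}^{n} (λ_i − z_l)]. -/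
/-!
Once every radius exceeds all `‖λᵢ‖`, the integrand has poles only at the `λᵢ` in each variable,
so the order of the radii is irrelevant and the iterated integral separates. Expanding the
numerator `∏_{m<l} (z_m - z_l) · Q` into monomials reduces it to the one-variable integrals
`∮ z^a / ∏ᵢ (λᵢ - z) dz = -2πi ∑ᵢ λᵢ^a / ∏_{j≠i} (λⱼ - λᵢ)` (partial fractions). Multiplying
these out gives a sum over all maps `t : Fin k → Fin n`; the Vandermonde factor kills the
non-injective ones, and for an embedding `σ` it cancels the factors `λ_{σ i} - λ_{σ m}`, `i < m`,
of `∏_m ∏_{j ≠ σ m} (λⱼ - λ_{σ m})`, leaving the Atiyah–Bott denominator.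
-/

noncomputable section

/-- Iterated circle integral `∮_{|z₁|=R₁} ⋯ ∮_{|z_k|=R_k} f(z) dz_k ⋯ dz₁`. -/
def itCircleIntegral : (k : ℕ) → ((Fin k → ℂ) → ℂ) → (Fin k → ℝ) → ℂ
  | 0, f, _ => f (fun i => i.elim0)
  | k + 1, f, R =>
      ∮ z in C((0 : ℂ), R 0),
        itCircleIntegral k (fun w => f (Fin.cons z w)) (fun i => R i.succ)

/-- Admissibility of radii: `1 ≪ R₁ ≪ ⋯ ≪ R_k`, encoded via a threshold function `F`. -/
def AdmRadii (k : ℕ) (F : ℝ → ℝ) (R : Fin k → ℝ) : Prop :=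
  (∀ h : 0 < k, F 1 < R ⟨0, h⟩) ∧
    ∀ i : Fin k, ∀ h : i.1 + 1 < k, F (R i) < R ⟨i.1 + 1, h⟩

open scoped Classical

open Finset Polynomial Complex Real

theorem Fintype.sum_eq_sum_embedding {α β M : Type*} [Fintype α] [DecidableEq α] [Fintype β]
    [AddCommMonoid M] (f : (α → β) → M) (hf : ∀ t, ¬Function.Injective t → f t = 0) :
    ∑ t, f t = ∑ σ : α ↪ β, f σ := by
  calc ∑ t, f t = ∑ t ∈ univ.filter Function.Injective, f t :=
        (sum_filter_of_ne fun t _ => not_imp_comm.1 (hf t)).symm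
    _ = ∑ t : {t : α → β // Function.Injective t}, f t := sum_subtype _ (by simp) _
    _ = ∑ σ : α ↪ β, f σ :=
        Fintype.sum_equiv (Equiv.subtypeInjectiveEquivEmbedding α β) _ _ fun _ => rfl

theorem prod_filter_lt_sub_eq_zero_iff {α R : Type*} [Fintype α] [LinearOrder α]
    [CommRing R] [NoZeroDivisors R] [Nontrivial R] (z : α → R) :
    ∏ p ∈ univ.filter (fun p : α × α => p.1 < p.2), (z p.1 - z p.2) = 0 ↔
      ¬Function.Injective z := by
  simp only [prod_eq_zero_iff, mem_filter, mem_univ, true_and, sub_eq_zero, Prod.exists,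
    Function.Injective, not_forall]
  constructor
  · rintro ⟨a, b, hab, h⟩
    exact ⟨a, b, h, hab.ne⟩
  · rintro ⟨a, b, h, hab⟩
    rcases lt_or_gt_of_ne hab with hlt | hlt
    exacts [⟨a, b, hlt, h⟩, ⟨b, a, hlt, h.symm⟩]

theorem prod_filter_lt_eq_prod_prod_lt {α M : Type*} [Fintype α] [LinearOrder α]
    [CommMonoid M] (g : α → α → M) :
    ∏ p ∈ univ.filter (fun p : α × α => p.1 < p.2), g p.1 p.2 =
      ∏ m, ∏ i ∈ univ.filter (· < m), g i m := by
  rw [prod_filter, Fintype.prod_prod_type, prod_comm]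
  exact prod_congr rfl fun m _ => (prod_filter _ _).symm

theorem prod_erase_eq_prod_lt_mul_prod_gt {α M : Type*} [Fintype α] [LinearOrder α]
    [CommMonoid M] (f : α → M) (m : α) :
    ∏ i ∈ univ.erase m, f i =
      (∏ i ∈ univ.filter (· < m), f i) * ∏ i ∈ univ.filter (m < ·), f i := by
  rw [← prod_union (disjoint_filter.2 fun i _ h => h.not_gt)]
  congr 1
  ext i
  simp

theorem prod_erase_apply_embedding {α ι M : Type*} [Fintype α] [DecidableEq α] [Fintype ι]
    [DecidableEq ι] [CommMonoid M] (σ : α ↪ ι) (f : ι → M) (m : α) :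
    ∏ j ∈ univ.erase (σ m), f j =
      (∏ i ∈ univ.erase m, f (σ i)) * ∏ j ∈ univ.filter (fun j => ∀ i, σ i ≠ j), f j := by
  have hsplit : univ.erase (σ m) =
      (univ.erase m).map σ ∪ univ.filter (fun j => ∀ i, σ i ≠ j) := by
    ext j
    simp only [mem_erase, mem_univ, and_true, mem_union, mem_map, mem_filter, true_and]
    by_cases hj : ∃ i, σ i = j
    · obtain ⟨i, rfl⟩ := hj
      simp [σ.injective.eq_iff]
    · push Not at hj
      simp [hj, (hj m).symm]
  rw [hsplit, prod_union, prod_map]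
  exact disjoint_left.2 fun j hj hj' => by
    obtain ⟨i, -, rfl⟩ := mem_map.1 hj
    exact (mem_filter.1 hj').2 i rfl

theorem prod_prod_erase_apply_embedding {α ι M : Type*} [Fintype α] [LinearOrder α]
    [Fintype ι] [DecidableEq ι] [CommMonoid M] (σ : α ↪ ι) (g : ι → ι → M) :
    ∏ m, ∏ j ∈ univ.erase (σ m), g j (σ m) =
      (∏ p ∈ univ.filter (fun p : α × α => p.1 < p.2), g (σ p.1) (σ p.2)) *
        ∏ m, ((∏ i ∈ univ.filter (m < ·), g (σ i) (σ m)) *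
          ∏ j ∈ univ.filter (fun j => ∀ i, σ i ≠ j), g j (σ m)) := by
  simp only [prod_erase_apply_embedding σ, prod_erase_eq_prod_lt_mul_prod_gt, mul_assoc,
    prod_mul_distrib]
  rw [prod_filter_lt_eq_prod_prod_lt fun a b => g (σ a) (σ b)]

theorem MvPolynomial.sum_eval_mul_prod {R σ ι : Type*} [CommSemiring R] [Fintype σ]
    [DecidableEq σ] [Fintype ι] (P : MvPolynomial σ R) (x a : ι → R) :
    ∑ t : σ → ι, eval (fun l => x (t l)) P * ∏ l, a (t l) =
      ∑ s ∈ P.support, coeff s P * ∏ l, ∑ i, x i ^ s l * a i := by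
  simp_rw [prod_univ_sum, Fintype.piFinset_univ, mul_sum, eval_eq', sum_mul]
  rw [sum_comm]
  exact sum_congr rfl fun t _ => sum_congr rfl fun s _ => by rw [mul_assoc, prod_mul_distrib]

theorem exists_eval_div_prod_sub_eq {F ι : Type*} [Field F] [Fintype ι] [DecidableEq ι]
    {lam : ι → F} (hlam : Function.Injective lam) (P : F[X]) :
    ∃ S : F[X], ∀ z, (∀ i, z ≠ lam i) →
      P.eval z / ∏ i, (lam i - z) =
        S.eval z + ∑ i, P.eval (lam i) / ((∏ j ∈ univ.erase i, (lam j - lam i)) * (lam i - z)) := by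
  -- Lagrange interpolation of `P(-x)` at the nodes `-λᵢ`, evaluated at `x = -z`: the
  -- orientations `λᵢ - z` and `λⱼ - λᵢ` then come out without signs.
  set v : ι → F := fun i => -lam i
  set P' : F[X] := P.comp (-X)
  set N : F[X] := Lagrange.nodal univ v
  have hv : Set.InjOn v (univ : Finset ι) := (neg_injective.comp hlam).injOn
  have hrem : P' %ₘ N = Lagrange.interpolate univ v (fun i => P.eval (lam i)) := by
    have hdeg : (P' %ₘ N).degree < #(univ : Finset ι) := by
      simpa [N, Lagrange.degree_nodal] using
        degree_modByMonic_lt P' (Lagrange.nodal_monic (s := univ) (v := v))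
    rw [Lagrange.eq_interpolate (f := P' %ₘ N) hv hdeg]
    refine Lagrange.interpolate_eq_of_values_eq_on _ _ fun i hi => ?_
    have := congrArg (eval (v i)) (modByMonic_add_div P' N)
    rw [eval_add, eval_mul, Lagrange.eval_nodal_at_node hi, zero_mul, add_zero] at this
    simpa [P', v] using this
  refine ⟨(P' /ₘ N).comp (-X), fun z hz => ?_⟩
  have hz' : ∀ i ∈ univ, -z ≠ v i := fun i _ => by simpa [v] using hz i
  have hD : ∏ i, (lam i - z) ≠ 0 := prod_ne_zero_iff.2 fun i _ => sub_ne_zero.2 (hz i).symm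
  have key := congrArg (eval (-z)) (modByMonic_add_div P' N)
  rw [hrem, eval_add, eval_mul, Lagrange.eval_interpolate_not_at_node _ hz',
    Lagrange.eval_nodal] at key
  simp only [P', v, eval_comp, eval_neg, eval_X, neg_neg, sub_neg_eq_add, neg_add_eq_sub,
    Lagrange.nodalWeight] at key
  rw [← key, ← mul_add, mul_div_cancel_left₀ _ hD, add_comm, eval_comp, eval_neg, eval_X]
  congr 1
  refine sum_congr rfl fun i _ => ?_
  rw [prod_inv_distrib, div_eq_mul_inv, mul_inv]
  ring

theorem circleIntegral_eval_div_prod_sub {ι : Type*} [Fintype ι] [DecidableEq ι]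
    {lam : ι → ℂ} (hlam : Function.Injective lam) (P : ℂ[X]) {R : ℝ} (hR : 0 ≤ R)
    (hlamR : ∀ i, ‖lam i‖ < R) :
    (∮ z in C(0, R), P.eval z / ∏ i, (lam i - z)) =
      -(2 * π * I) * ∑ i, P.eval (lam i) / ∏ j ∈ univ.erase i, (lam j - lam i) := by
  obtain ⟨S, hS⟩ := exists_eval_div_prod_sub_eq hlam P
  have hball : ∀ i, lam i ∈ Metric.ball (0 : ℂ) R := fun i => mem_ball_zero_iff.2 (hlamR i)
  have hsphere : ∀ z ∈ Metric.sphere (0 : ℂ) R, ∀ i, z ≠ lam i := fun z hz i h =>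
    (Metric.sphere_disjoint_ball.ne_of_mem hz (hball i)) h
  have hpole : ∀ i (c : ℂ), CircleIntegrable (fun z => c * (lam i - z)⁻¹) 0 R := fun i c =>
    (continuousOn_const.mul ((continuousOn_const.sub continuousOn_id).inv₀
      fun z hz => sub_ne_zero.2 (hsphere z hz i).symm)).circleIntegrable hR
  have hS0 : (∮ z in C(0, R), S.eval z) = 0 :=
    Complex.circleIntegral_eq_zero_of_differentiable_on_off_countable hR Set.countable_empty
      S.continuous.continuousOn fun z _ => S.differentiableAt
  have hpoleInt : ∀ i, (∮ z in C(0, R), (lam i - z)⁻¹) = -(2 * π * I) := fun i => by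
    have hflip : (fun z => (lam i - z)⁻¹) = fun z => -1 * (z - lam i)⁻¹ := by
      funext z; rw [← neg_sub z, inv_neg, neg_one_mul]
    rw [hflip, circleIntegral.integral_const_mul,
      circleIntegral.integral_sub_inv_of_mem_ball (hball i), neg_one_mul]
  calc (∮ z in C(0, R), P.eval z / ∏ i, (lam i - z))
      = ∮ z in C(0, R), (S.eval z + ∑ i, P.eval (lam i) / (∏ j ∈ univ.erase i, (lam j - lam i)) *
          (lam i - z)⁻¹) :=
        circleIntegral.integral_congr hR fun z hz => by
          rw [hS z (hsphere z hz)]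
          simp only [div_eq_mul_inv, mul_inv, mul_assoc]
    _ = _ := by
      rw [circleIntegral.integral_add (S.continuous.continuousOn.circleIntegrable hR)
          (CircleIntegrable.fun_sum _ fun i _ => hpole i _),
        circleIntegral.integral_fun_sum fun i _ => hpole i _, hS0, zero_add, mul_sum]
      simp only [circleIntegral.integral_const_mul, hpoleInt]
      exact sum_congr rfl fun i _ => mul_comm _ _

theorem itCircleIntegral_sum_mul_prod {ι : Type*} (s : Finset ι) {k : ℕ} (c : ι → ℂ)
    (g : ι → Fin k → ℂ → ℂ) (R : Fin k → ℝ)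
    (hg : ∀ i ∈ s, ∀ l, CircleIntegrable (g i l) 0 (R l)) :
    itCircleIntegral k (fun z => ∑ i ∈ s, c i * ∏ l, g i l (z l)) R =
      ∑ i ∈ s, c i * ∏ l, ∮ w in C(0, R l), g i l w := by
  induction k generalizing c with
  | zero => simp [itCircleIntegral]
  | succ k ih =>
    have hslice : ∀ w : ℂ,
        itCircleIntegral k
            (fun z => ∑ i ∈ s, c i * ∏ l, g i l ((Fin.cons w z : Fin (k + 1) → ℂ) l))
            (fun l => R l.succ) =
        ∑ i ∈ s, (c i * ∏ l : Fin k, ∮ u in C(0, R l.succ), g i l.succ u) * g i 0 w := by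
      intro w
      simp only [Fin.prod_univ_succ, Fin.cons_zero, Fin.cons_succ, mul_left_comm (c _),
        ← mul_assoc]
      rw [ih _ (fun i l => g i l.succ) _ fun i hi l => hg i hi l.succ]
      exact sum_congr rfl fun i _ => by ring
    rw [itCircleIntegral]
    simp only [hslice]
    have hg0 : ∀ i ∈ s, ∀ a : ℂ, CircleIntegrable (fun z => a * g i 0 z) 0 (R 0) :=
      fun i hi _ => (hg i hi 0).const_fun_smul
    rw [circleIntegral.integral_fun_sum fun i hi => hg0 i hi _]
    simp only [circleIntegral.integral_const_mul, Fin.prod_univ_succ]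
    exact sum_congr rfl fun i _ => by ring

theorem itCircleIntegral_eval_div_prod_prod_sub {ι : Type*} [Fintype ι] [DecidableEq ι]
    {lam : ι → ℂ} (hlam : Function.Injective lam) {k : ℕ} (P : MvPolynomial (Fin k) ℂ)
    {R : Fin k → ℝ} (hR : ∀ l, 0 ≤ R l) (hlamR : ∀ l i, ‖lam i‖ < R l) :
    itCircleIntegral k (fun z => MvPolynomial.eval z P / ∏ l, ∏ i, (lam i - z l)) R =
      (-(2 * π * I)) ^ k * ∑ t : Fin k → ι, MvPolynomial.eval (fun l => lam (t l)) P *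
        ∏ l, (∏ j ∈ univ.erase (t l), (lam j - lam (t l)))⁻¹ := by
  have hsep : (fun z => MvPolynomial.eval z P / ∏ l, ∏ i, (lam i - z l)) = fun z =>
      ∑ s ∈ P.support, MvPolynomial.coeff s P * ∏ l, (z l ^ s l / ∏ i, (lam i - z l)) := by
    funext z
    rw [MvPolynomial.eval_eq', sum_div]
    exact sum_congr rfl fun s _ => by rw [mul_div_assoc, prod_div_distrib]
  have hint : ∀ s ∈ P.support, ∀ l,
      CircleIntegrable (fun w => w ^ s l / ∏ i, (lam i - w)) 0 (R l) := fun s _ l =>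
    ((continuousOn_pow _).div (continuousOn_finsetProd _ fun i _ => continuousOn_const.sub
      continuousOn_id) fun w hw => prod_ne_zero_iff.2 fun i _ => sub_ne_zero.2 fun h =>
        Metric.sphere_disjoint_ball.ne_of_mem hw (mem_ball_zero_iff.2 (hlamR l i)) h.symm
      ).circleIntegrable (hR l)
  have hmonomial : ∀ l m, (∮ w in C(0, R l), w ^ m / ∏ i, (lam i - w)) =
      -(2 * π * I) * ∑ i, lam i ^ m * (∏ j ∈ univ.erase i, (lam j - lam i))⁻¹ := fun l m => by
    simpa [div_eq_mul_inv] using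
      circleIntegral_eval_div_prod_sub hlam (X ^ m) (hR l) (hlamR l)
  rw [hsep, itCircleIntegral_sum_mul_prod _ _ _ _ hint,
    MvPolynomial.sum_eval_mul_prod P lam fun i => (∏ j ∈ univ.erase i, (lam j - lam i))⁻¹, mul_sum]
  simp only [hmonomial, prod_mul_distrib, prod_const, card_univ, Fintype.card_fin]
  exact sum_congr rfl fun s _ => mul_left_comm _ _ _

theorem AdmRadii.const_lt {k : ℕ} {M : ℝ} {R : Fin k → ℝ} (h : AdmRadii k (fun _ => M) R)
    (l : Fin k) : M < R l := by
  obtain ⟨_ | j, hl⟩ := l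
  exacts [h.1 hl, h.2 ⟨j, by omega⟩ hl]

theorem fixed_point_sum_eq_iterated_residue_general (k n : ℕ)
    (lam : Fin n → ℂ) (hlam : Function.Injective lam)
    (Q : MvPolynomial (Fin k) ℂ) :
    ∃ F : ℝ → ℝ, ∀ R : Fin k → ℝ, AdmRadii k F R →
      (∑ σ : Fin k ↪ Fin n,
          MvPolynomial.eval (fun i => lam (σ i)) Q /
            ∏ m : Fin k,
              ((∏ i ∈ Finset.univ.filter (fun i : Fin k => m < i),
                  (lam (σ i) - lam (σ m))) *
                ∏ j ∈ Finset.univ.filter (fun j : Fin n => ∀ i, σ i ≠ j),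
                  (lam j - lam (σ m))))
        = (-1 : ℂ) ^ k * (1 / (2 * (Real.pi : ℂ) * Complex.I)) ^ k *
            itCircleIntegral k
              (fun z =>
                ((∏ p ∈ Finset.univ.filter
                      (fun p : Fin k × Fin k => p.1 < p.2), (z p.1 - z p.2)) *
                    MvPolynomial.eval z Q) /
                  ∏ l : Fin k, ∏ i : Fin n, (lam i - z l)) R := by
  refine ⟨fun _ => ∑ i, ‖lam i‖, fun R hR => ?_⟩
  have hlamR : ∀ l i, ‖lam i‖ < R l := fun l i =>
    (single_le_sum (fun j _ => norm_nonneg (lam j)) (mem_univ i)).trans_lt (hR.const_lt l)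
  have hR0 : ∀ l, 0 ≤ R l := fun l =>
    (sum_nonneg fun i _ => norm_nonneg (lam i)).trans (hR.const_lt l).le
  set V : MvPolynomial (Fin k) ℂ := ∏ p ∈ univ.filter (fun p : Fin k × Fin k => p.1 < p.2),
    (MvPolynomial.X p.1 - MvPolynomial.X p.2)
  have hV : ∀ z, MvPolynomial.eval z V = ∏ p ∈ univ.filter (fun p : Fin k × Fin k => p.1 < p.2),
      (z p.1 - z p.2) := fun z => by simp [V, map_prod]
  have hconst : (-1 : ℂ) ^ k * (1 / (2 * π * I)) ^ k * (-(2 * π * I)) ^ k = 1 := by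
    rw [← mul_pow, ← mul_pow, neg_one_mul, neg_mul_neg, one_div, inv_mul_cancel₀ two_pi_I_ne_zero,
      one_pow]
  simp only [← hV, ← map_mul]
  rw [itCircleIntegral_eval_div_prod_prod_sub hlam _ hR0 hlamR, ← mul_assoc, hconst, one_mul,
    Fintype.sum_eq_sum_embedding]
  · refine sum_congr rfl fun σ _ => ?_
    have hVσ : MvPolynomial.eval (fun l => lam (σ l)) V ≠ 0 := by
      rw [hV, Ne, prod_filter_lt_sub_eq_zero_iff fun l => lam (σ l), not_not]
      exact hlam.comp σ.injective
    rw [map_mul, prod_inv_distrib, ← div_eq_mul_inv,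
      prod_prod_erase_apply_embedding σ fun a b => lam a - lam b, ← hV fun l => lam (σ l),
      mul_div_mul_left _ _ hVσ]
    -- the two filters by `∀ i, σ i ≠ j` differ only in their `Decidable` instances
    congr!
  · intro t ht
    rw [map_mul, hV, (prod_filter_lt_sub_eq_zero_iff fun l => lam (t l)).2 fun h => ht h.of_comp,
      zero_mul, zero_mul]

theorem fixed_point_sum_eq_iterated_residue (k n : ℕ) (hkn : k ≤ n)
    (lam : Fin n → ℂ) (hlam : Function.Injective lam)
    (Q : MvPolynomial (Fin k) ℂ) (d : ℕ) (hQ : Q.IsHomogeneous d) :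
    ∃ F : ℝ → ℝ, ∀ R : Fin k → ℝ, AdmRadii k F R →
      (∑ σ : Fin k ↪ Fin n,
          MvPolynomial.eval (fun i => lam (σ i)) Q /
            ∏ m : Fin k,
              ((∏ i ∈ Finset.univ.filter (fun i : Fin k => m < i),
                  (lam (σ i) - lam (σ m))) *
                ∏ j ∈ Finset.univ.filter (fun j : Fin n => ∀ i, σ i ≠ j),
                  (lam j - lam (σ m))))
        = (-1 : ℂ) ^ k * (1 / (2 * (Real.pi : ℂ) * Complex.I)) ^ k *
            itCircleIntegral k
              (fun z =>
                ((∏ p ∈ Finset.univ.filter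
                      (fun p : Fin k × Fin k => p.1 < p.2), (z p.1 - z p.2)) *
                    MvPolynomial.eval z Q) /
                  ∏ l : Fin k, ∏ i : Fin n, (lam i - z l)) R :=
  fixed_point_sum_eq_iterated_residue_general k n lam hlam Q

end
end
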